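/- Fix a real number q > 1 and set τ = 2π/log q. For an integer n ≥ 1 let Φ_n be the function, holomorphic on ℂ \ (τ/2)ℤ, given by Φ_n(z) = (1/(q+1))·[ q^{1−n/2}·(q^{iz(n+1)} − q^{−iz(n+1)}) − q^{−n/2}·(q^{iz(n−1)} − q^{−iz(n−1)}) ] / (q^{iz} − q^{−iz}), and set Φ_0(z) = 1. Let α ∈ ℝ, z_0 = α − i/2, N ≥ 0 an integer, and c_0, c_1, …, c_N ∈ ℂ. If sup_{n ∈ ℕ} | ∑_{m=0}^{N} c_m · (iteratedDeriv m (z ↦ Φ_n(z))) (z_0) | < ∞, then c_m = 0 for every m with 1 ≤ m ≤ N. -/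

import Mathlib

/-!
For `n = k + 2` one has `φ_z(n) = (q+1)⁻¹ q^{-n/2} (q U_{k+2}(z) - U_k(z))`, where
`U_k = (x^{k+1} - x^{-k-1}) / (x - x⁻¹)` with `x = q^{iz}`, and
`U_{k+2} - U_k = x^{k+2} + x^{-k-2}`.
Let `D = ∑ c_m (d/dz)^m`, with symbol `P` (so `D e^{γz} = P(γ) e^{γz}`), and
`G_k = x^{-k} (D U_k)(z₀)`. At `z₀ = α - i/2` we have `|x| = q^{1/2}`, so `w = x^{-2}` has
`|w| = 1/q`; the hypothesis says exactly that `q G_{k+2} - w G_k` is bounded, while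
`G_{k+2} - w G_k = P(i(k+2) log q) + w^{k+2} P(-i(k+2) log q)`.
The first recursion is stable because `|w| < q`, so `G` is bounded. Hence `P` is bounded along
`i(k+2) log q → ∞`, so it is constant, i.e. `c_m = 0` for `m ≥ 1`.
-/

/-- `q^w = exp(w log q)`. -/
noncomputable def qpow (q : ℝ) (w : ℂ) : ℂ := Complex.exp (w * (Real.log q : ℂ))

/-- `τ = 2π / log q`. -/
noncomputable def tauq (q : ℝ) : ℝ := 2 * Real.pi / Real.log q

/-- The elementary spherical function value `φ_z(n)` on a homogeneous tree of degree
`q+1`: `φ_z(0) = 1` and for `n ≥ 1`,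
`φ_z(n) = (1/(q+1))·[q^{1-n/2}(q^{iz(n+1)} - q^{-iz(n+1)}) - q^{-n/2}(q^{iz(n-1)} - q^{-iz(n-1)})] / (q^{iz} - q^{-iz})`. -/
noncomputable def phiSph (q : ℝ) (z : ℂ) (n : ℕ) : ℂ :=
  if n = 0 then 1 else
    (1 / ((q : ℂ) + 1)) *
      ((qpow q (1 - (n : ℂ) / 2) *
          (qpow q (Complex.I * z * ((n : ℂ) + 1)) - qpow q (-(Complex.I * z) * ((n : ℂ) + 1))) -
        qpow q (-(n : ℂ) / 2) *
          (qpow q (Complex.I * z * ((n : ℂ) - 1)) - qpow q (-(Complex.I * z) * ((n : ℂ) - 1)))) /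
        (qpow q (Complex.I * z) - qpow q (-(Complex.I * z))))

open Complex Polynomial Filter Topology

section DiffOp

variable (c : ℕ → ℂ) (N : ℕ)

noncomputable def diffOp (f : ℂ → ℂ) (z : ℂ) : ℂ :=
  ∑ m ∈ Finset.range (N + 1), c m * iteratedDeriv m f z

noncomputable def diffOpSymbol : ℂ[X] :=
  ∑ m ∈ Finset.range (N + 1), C (c m) * X ^ m

variable {c N}

lemma coeff_diffOpSymbol {m : ℕ} (hm : m ≤ N) : (diffOpSymbol c N).coeff m = c m := by
  simp [diffOpSymbol, finsetSum_coeff, Nat.lt_succ_of_le hm]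

lemma diffOp_cexp_mul (γ z : ℂ) :
    diffOp c N (fun z => cexp (γ * z)) z = (diffOpSymbol c N).eval γ * cexp (γ * z) := by
  simp [diffOp, diffOpSymbol, eval_finsetSum, Finset.sum_mul, mul_assoc]

lemma diffOp_congr {f g : ℂ → ℂ} {z : ℂ} (h : f =ᶠ[𝓝 z] g) :
    diffOp c N f z = diffOp c N g z := by
  simp only [diffOp, (h.iteratedDeriv _).eq_of_nhds]

lemma diffOp_fun_add {f g : ℂ → ℂ} {z : ℂ} (hf : ContDiffAt ℂ N f z) (hg : ContDiffAt ℂ N g z) :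
    diffOp c N (fun z => f z + g z) z = diffOp c N f z + diffOp c N g z := by
  simp only [diffOp, ← Finset.sum_add_distrib, ← mul_add]
  refine Finset.sum_congr rfl fun m hm => ?_
  have hmN : (m : WithTop ℕ∞) ≤ N := by exact_mod_cast Finset.mem_range_succ_iff.mp hm
  rw [iteratedDeriv_fun_add (hf.of_le hmN) (hg.of_le hmN)]

lemma diffOp_fun_sub {f g : ℂ → ℂ} {z : ℂ} (hf : ContDiffAt ℂ N f z) (hg : ContDiffAt ℂ N g z) :
    diffOp c N (fun z => f z - g z) z = diffOp c N f z - diffOp c N g z := by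
  simp only [diffOp, ← Finset.sum_sub_distrib, ← mul_sub]
  refine Finset.sum_congr rfl fun m hm => ?_
  have hmN : (m : WithTop ℕ∞) ≤ N := by exact_mod_cast Finset.mem_range_succ_iff.mp hm
  rw [iteratedDeriv_fun_sub (hf.of_le hmN) (hg.of_le hmN)]

lemma diffOp_const_mul (a : ℂ) (f : ℂ → ℂ) (z : ℂ) :
    diffOp c N (fun z => a * f z) z = a * diffOp c N f z := by
  simp only [diffOp, iteratedDeriv_const_mul_field, Finset.mul_sum]
  exact Finset.sum_congr rfl fun m _ => by ring

end DiffOp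

section Qpow

variable (q : ℝ)

lemma qpow_ne_zero (a : ℂ) : qpow q a ≠ 0 := Complex.exp_ne_zero _

lemma qpow_add (a b : ℂ) : qpow q (a + b) = qpow q a * qpow q b := by
  simp only [qpow, add_mul, Complex.exp_add]

lemma qpow_neg (a : ℂ) : qpow q (-a) = (qpow q a)⁻¹ := by
  simp only [qpow, neg_mul, Complex.exp_neg]

lemma qpow_mul_natCast (a : ℂ) (n : ℕ) : qpow q (a * n) = qpow q a ^ n := by
  rw [qpow, qpow, ← Complex.exp_nat_mul]
  ring_nf

lemma qpow_one {q : ℝ} (hq : 0 < q) : qpow q 1 = q := by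
  rw [qpow, one_mul, ← Complex.ofReal_exp, Real.exp_log hq]

lemma norm_qpow (a : ℂ) : ‖qpow q a‖ = Real.exp (a.re * Real.log q) := by
  rw [qpow, Complex.norm_exp, Complex.re_mul_ofReal]

end Qpow

section Chebyshev

variable {q : ℝ} {c : ℕ → ℂ} {N : ℕ}

-- Chebyshev's `U_k` at `(x + x⁻¹) / 2`, for `x = q^{iz}`.
noncomputable def chebU (q : ℝ) (k : ℕ) (z : ℂ) : ℂ :=
  (qpow q (I * z * ((k : ℂ) + 1)) - qpow q (-(I * z) * ((k : ℂ) + 1))) /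
    (qpow q (I * z) - qpow q (-(I * z)))

lemma phiSph_add_two (hq : 0 < q) (k : ℕ) (z : ℂ) :
    phiSph q z (k + 2) = ((q : ℂ) + 1)⁻¹ * qpow q (-1 / 2) ^ (k + 2) *
      ((q : ℂ) * chebU q (k + 2) z - chebU q k z) := by
  have h0 : qpow q (-((k + 2 : ℕ) : ℂ) / 2) = qpow q (-1 / 2) ^ (k + 2) := by
    rw [← qpow_mul_natCast]
    congr 1
    ring
  have h1 : qpow q (1 - ((k + 2 : ℕ) : ℂ) / 2) = q * qpow q (-1 / 2) ^ (k + 2) := by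
    rw [← h0, ← qpow_one hq, ← qpow_add]
    congr 1
    ring
  have h2 : ((k + 2 : ℕ) : ℂ) - 1 = (k : ℂ) + 1 := by push_cast; ring
  rw [phiSph, if_neg (by omega), chebU, chebU, h0, h1, h2]
  push_cast
  ring

lemma contDiffAt_chebU (k : ℕ) {z : ℂ} (hz : qpow q (I * z) ≠ qpow q (-(I * z)))
    {n : WithTop ℕ∞} : ContDiffAt ℂ n (chebU q k) z := by
  unfold chebU qpow
  fun_prop (disch := exact sub_ne_zero.mpr hz)

lemma chebU_add_two_sub (k : ℕ) {z : ℂ} (hz : qpow q (I * z) ≠ qpow q (-(I * z))) :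
    chebU q (k + 2) z - chebU q k z =
      cexp (((k + 2 : ℕ) : ℂ) * (I * Real.log q) * z) +
        cexp (-(((k + 2 : ℕ) : ℂ) * (I * Real.log q)) * z) := by
  have hxy : qpow q (I * z) * qpow q (-(I * z)) = 1 := by
    rw [qpow_neg, mul_inv_cancel₀ (qpow_ne_zero q _)]
  set x := qpow q (I * z)
  set y := qpow q (-(I * z))
  have hU : ∀ n : ℕ, chebU q n z = (x ^ (n + 1) - y ^ (n + 1)) / (x - y) := fun n => by
    rw [chebU, ← qpow_mul_natCast, ← qpow_mul_natCast]
    push_cast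
    rfl
  have hx : cexp (((k + 2 : ℕ) : ℂ) * (I * Real.log q) * z) = x ^ (k + 2) := by
    rw [← qpow_mul_natCast, qpow]
    ring_nf
  have hy : cexp (-(((k + 2 : ℕ) : ℂ) * (I * Real.log q)) * z) = y ^ (k + 2) := by
    rw [← qpow_mul_natCast, qpow]
    ring_nf
  rw [hU, hU, hx, hy, div_sub_div_same, div_eq_iff (sub_ne_zero.mpr hz)]
  linear_combination (x ^ (k + 1) - y ^ (k + 1)) * hxy

lemma diffOp_phiSph_add_two (hq : 0 < q) (k : ℕ) {z : ℂ}
    (hz : qpow q (I * z) ≠ qpow q (-(I * z))) :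
    diffOp c N (fun z => phiSph q z (k + 2)) z = ((q : ℂ) + 1)⁻¹ * qpow q (-1 / 2) ^ (k + 2) *
      ((q : ℂ) * diffOp c N (chebU q (k + 2)) z - diffOp c N (chebU q k) z) := by
  simp_rw [phiSph_add_two hq]
  rw [diffOp_const_mul, diffOp_fun_sub (f := fun z => (q : ℂ) * chebU q (k + 2) z)
    (contDiffAt_const.mul (contDiffAt_chebU _ hz)) (contDiffAt_chebU _ hz), diffOp_const_mul]

lemma diffOp_chebU_add_two_sub (k : ℕ) {z : ℂ} (hz : qpow q (I * z) ≠ qpow q (-(I * z))) :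
    diffOp c N (chebU q (k + 2)) z - diffOp c N (chebU q k) z =
      (diffOpSymbol c N).eval (((k + 2 : ℕ) : ℂ) * (I * Real.log q)) *
          cexp (((k + 2 : ℕ) : ℂ) * (I * Real.log q) * z) +
        (diffOpSymbol c N).eval (-(((k + 2 : ℕ) : ℂ) * (I * Real.log q))) *
          cexp (-(((k + 2 : ℕ) : ℂ) * (I * Real.log q)) * z) := by
  have hopen : IsOpen {z : ℂ | qpow q (I * z) ≠ qpow q (-(I * z))} :=
    isOpen_ne_fun (by unfold qpow; fun_prop) (by unfold qpow; fun_prop)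
  rw [← diffOp_fun_sub (contDiffAt_chebU _ hz) (contDiffAt_chebU _ hz),
    diffOp_congr (eventuallyEq_of_mem (hopen.mem_nhds hz) fun w hw => chebU_add_two_sub k hw),
    diffOp_fun_add (by fun_prop) (by fun_prop), diffOp_cexp_mul, diffOp_cexp_mul]

end Chebyshev

lemma exists_bound_of_norm_sub_le {𝕜 : Type*} [NormedField 𝕜] {G : ℕ → 𝕜} {a b : 𝕜} {C : ℝ}
    (hab : ‖b‖ < ‖a‖) (h : ∀ k, ‖a * G (k + 2) - b * G k‖ ≤ C) : ∃ R, ∀ k, ‖G k‖ ≤ R := by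
  set R := max (max ‖G 0‖ ‖G 1‖) (C / (‖a‖ - ‖b‖))
  have hC : C ≤ (‖a‖ - ‖b‖) * R := by
    rw [← div_le_iff₀' (sub_pos.mpr hab)]
    exact le_max_right _ _
  have hstep : ∀ k, ‖G k‖ ≤ R → ‖G (k + 2)‖ ≤ R := fun k hk => by
    have : ‖a‖ * ‖G (k + 2)‖ ≤ ‖a‖ * R := calc
      ‖a‖ * ‖G (k + 2)‖ = ‖a * G (k + 2)‖ := (norm_mul _ _).symm
      _ ≤ ‖a * G (k + 2) - b * G k‖ + ‖b * G k‖ := norm_le_norm_sub_add _ _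
      _ ≤ (‖a‖ - ‖b‖) * R + ‖b‖ * R := by
        rw [norm_mul]
        gcongr
        exact (h k).trans hC
      _ = ‖a‖ * R := by ring
    exact le_of_mul_le_mul_left this ((norm_nonneg b).trans_lt hab)
  have hpair : ∀ k, ‖G k‖ ≤ R ∧ ‖G (k + 1)‖ ≤ R := fun k => by
    induction k with
    | zero => exact ⟨(le_max_left _ _).trans' (le_max_left _ _),
        (le_max_left _ _).trans' (le_max_right _ _)⟩
    | succ k ih => exact ⟨ih.2, hstep k ih.1⟩
  exact ⟨R, fun k => (hpair k).1⟩

lemma tendsto_pow_mul_eval_natCast_mul (p : ℂ[X]) {w : ℂ} (hw : ‖w‖ < 1) (β : ℂ) :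
    Tendsto (fun n : ℕ => w ^ n * p.eval (n * β)) atTop (𝓝 0) := by
  have hterm : ∀ i : ℕ, Tendsto (fun n : ℕ => (n : ℂ) ^ i * w ^ n) atTop (𝓝 0) := fun i => by
    rw [tendsto_zero_iff_norm_tendsto_zero]
    simpa using tendsto_pow_const_mul_const_pow_of_abs_lt_one i (by rwa [abs_norm])
  have hsum : (fun n : ℕ => w ^ n * p.eval (n * β)) =
      fun n : ℕ => ∑ i ∈ Finset.range (p.natDegree + 1),
        p.coeff i * β ^ i * ((n : ℂ) ^ i * w ^ n) := by
    funext n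
    rw [eval_eq_sum_range, Finset.mul_sum]
    exact Finset.sum_congr rfl fun i _ => by ring
  rw [hsum]
  simpa using tendsto_finsetSum _ fun i _ => (hterm i).const_mul (p.coeff i * β ^ i)

lemma natDegree_eq_zero_of_forall_norm_eval_le {R ι : Type*} [NormedRing R]
    [IsAbsoluteValue (norm : R → ℝ)] {l : Filter ι} [l.NeBot] (p : R[X]) {ξ : ι → R}
    (hξ : Tendsto (fun i => ‖ξ i‖) l atTop) {C : ℝ} (hC : ∀ i, ‖p.eval (ξ i)‖ ≤ C) :
    p.natDegree = 0 := by
  by_contra h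
  obtain ⟨i, hi⟩ := ((p.tendsto_norm_atTop (natDegree_pos_iff_degree_pos.mp
    (Nat.pos_of_ne_zero h)) hξ).eventually_gt_atTop C).exists
  exact (hC i).not_gt hi

section Tree

variable {q : ℝ} {c : ℕ → ℂ} {N : ℕ}

noncomputable def scaledChebU (q : ℝ) (c : ℕ → ℂ) (N : ℕ) (z : ℂ) (k : ℕ) : ℂ :=
  qpow q (-(I * z)) ^ k * diffOp c N (chebU q k) z

lemma scaledChebU_add_two_sub (k : ℕ) {z : ℂ} (hz : qpow q (I * z) ≠ qpow q (-(I * z))) :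
    scaledChebU q c N z (k + 2) - qpow q (-(I * z)) ^ 2 * scaledChebU q c N z k =
      (diffOpSymbol c N).eval (((k + 2 : ℕ) : ℂ) * (I * Real.log q)) +
        (qpow q (-(I * z)) ^ 2) ^ (k + 2) *
          (diffOpSymbol c N).eval (((k + 2 : ℕ) : ℂ) * -(I * Real.log q)) := by
  have hx : cexp (((k + 2 : ℕ) : ℂ) * (I * Real.log q) * z) =
      (qpow q (-(I * z)) ^ (k + 2))⁻¹ := by
    rw [qpow_neg, inv_pow, inv_inv, ← qpow_mul_natCast, qpow]
    ring_nf
  have hy : cexp (-(((k + 2 : ℕ) : ℂ) * (I * Real.log q)) * z) = qpow q (-(I * z)) ^ (k + 2) := by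
    rw [← qpow_mul_natCast, qpow]
    ring_nf
  have hu : qpow q (-(I * z)) ^ (k + 2) ≠ 0 := pow_ne_zero _ (qpow_ne_zero q _)
  calc scaledChebU q c N z (k + 2) - qpow q (-(I * z)) ^ 2 * scaledChebU q c N z k
      = qpow q (-(I * z)) ^ (k + 2) *
          (diffOp c N (chebU q (k + 2)) z - diffOp c N (chebU q k) z) := by
        simp only [scaledChebU]
        ring
    _ = _ := by
        rw [diffOp_chebU_add_two_sub k hz, hx, hy, neg_mul_eq_mul_neg]
        field_simp
        ring

lemma norm_qpow_neg_I_mul (α : ℝ) :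
    ‖qpow q (-(I * ((α : ℂ) - I / 2)))‖ = ‖qpow q (-1 / 2)‖ := by
  norm_num [norm_qpow]

lemma norm_qpow_neg_I_mul_sq (hq : 0 < q) (α : ℝ) :
    ‖qpow q (-(I * ((α : ℂ) - I / 2))) ^ 2‖ = q⁻¹ := by
  rw [norm_pow, norm_qpow_neg_I_mul, ← norm_pow, ← qpow_mul_natCast, norm_qpow]
  norm_num [Real.exp_neg, Real.exp_log hq]

lemma qpow_I_mul_ne (hq : 1 < q) (α : ℝ) :
    qpow q (I * ((α : ℂ) - I / 2)) ≠ qpow q (-(I * ((α : ℂ) - I / 2))) := by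
  intro h
  have hu : qpow q (-(I * ((α : ℂ) - I / 2))) ^ 2 = 1 := by
    rw [sq]
    nth_rewrite 1 [← h]
    rw [qpow_neg, mul_inv_cancel₀ (qpow_ne_zero q _)]
  have := norm_qpow_neg_I_mul_sq (by linarith) α
  rw [hu, norm_one] at this
  linarith [inv_lt_one_of_one_lt₀ hq]

lemma norm_scaledChebU_sub (hq : 1 < q) (α : ℝ) (k : ℕ) :
    ‖(q : ℂ) * scaledChebU q c N (α - I / 2) (k + 2) -
        qpow q (-(I * ((α : ℂ) - I / 2))) ^ 2 * scaledChebU q c N (α - I / 2) k‖ =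
      (q + 1) * ‖diffOp c N (fun z => phiSph q z (k + 2)) (α - I / 2)‖ := by
  have hq0 : 0 < q := by linarith
  have hnorm : ‖qpow q (-(I * ((α : ℂ) - I / 2))) ^ (k + 2)‖ = ‖qpow q (-1 / 2) ^ (k + 2)‖ := by
    rw [norm_pow, norm_pow, norm_qpow_neg_I_mul]
  have hq1 : ‖(q : ℂ) + 1‖ = q + 1 := by
    rw [← Complex.ofReal_one, ← Complex.ofReal_add, Complex.norm_real,
      Real.norm_of_nonneg (by linarith)]
  rw [diffOp_phiSph_add_two hq0 k (qpow_I_mul_ne hq α)]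
  calc _ = ‖qpow q (-(I * ((α : ℂ) - I / 2))) ^ (k + 2) *
        ((q : ℂ) * diffOp c N (chebU q (k + 2)) (α - I / 2) -
          diffOp c N (chebU q k) (α - I / 2))‖ := by
        simp only [scaledChebU]
        ring_nf
    _ = _ := by
        rw [norm_mul, hnorm, norm_mul, norm_mul, norm_inv, hq1]
        field_simp

lemma exists_bound_eval_diffOpSymbol (hq : 1 < q) (α : ℝ) {R : ℝ}
    (hR : ∀ k, ‖scaledChebU q c N (α - I / 2) k‖ ≤ R) :
    ∃ B, ∀ k : ℕ, ‖(diffOpSymbol c N).eval (((k + 2 : ℕ) : ℂ) * (I * Real.log q))‖ ≤ B := by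
  set w := qpow q (-(I * ((α : ℂ) - I / 2))) ^ 2
  have hw : ‖w‖ < 1 := by
    rw [norm_qpow_neg_I_mul_sq (by linarith) α]
    exact inv_lt_one_of_one_lt₀ hq
  obtain ⟨C, hC⟩ := (tendsto_pow_mul_eval_natCast_mul (diffOpSymbol c N) hw
    (-(I * Real.log q))).norm.bddAbove_range
  refine ⟨R + ‖w‖ * R + C, fun k => ?_⟩
  rw [eq_sub_of_add_eq (scaledChebU_add_two_sub k (qpow_I_mul_ne hq α)).symm]
  refine (norm_sub_le _ _).trans (add_le_add ((norm_sub_le _ _).trans (add_le_add (hR _) ?_))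
    (hC ⟨k + 2, rfl⟩))
  rw [norm_mul]
  gcongr
  exact hR k

end Tree

/-- If at `z₀ = α - i/2` the quantities
`|∑_{m=0}^{N} c_m · (d/dz)^m φ_z(n) |_{z=z₀}|` are bounded uniformly in `n ∈ ℕ`, then
`c_m = 0` for `1 ≤ m ≤ N`. -/
theorem stmt18 (q : ℝ) (hq : 1 < q) (α : ℝ) (N : ℕ) (c : ℕ → ℂ)
    (hbd : ∃ M : ℝ, ∀ n : ℕ,
      ‖(∑ m ∈ Finset.range (N + 1),
        c m * iteratedDeriv m (fun z : ℂ => phiSph q z n) ((α : ℂ) - Complex.I / 2))‖ ≤ M) :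
    ∀ m : ℕ, 1 ≤ m → m ≤ N → c m = 0 := by
  obtain ⟨M, hM⟩ := hbd
  have hq0 : 0 < q := by linarith
  have hw : ‖qpow q (-(I * ((α : ℂ) - I / 2))) ^ 2‖ < ‖(q : ℂ)‖ := by
    rw [norm_qpow_neg_I_mul_sq hq0 α, Complex.norm_real, Real.norm_of_nonneg hq0.le]
    exact (inv_lt_one_of_one_lt₀ hq).trans hq
  obtain ⟨R, hR⟩ := exists_bound_of_norm_sub_le hw (C := (q + 1) * M)
    fun k => (norm_scaledChebU_sub hq α k).trans_le (by gcongr; exact hM (k + 2))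
  obtain ⟨B, hB⟩ := exists_bound_eval_diffOpSymbol hq α hR
  have hγ : Tendsto (fun k : ℕ => ‖((k + 2 : ℕ) : ℂ) * (I * Real.log q)‖) atTop atTop := by
    simp only [norm_mul, Complex.norm_natCast, norm_I, one_mul, Complex.norm_real,
      Real.norm_of_nonneg (Real.log_nonneg hq.le)]
    exact (tendsto_natCast_atTop_atTop.comp (tendsto_add_atTop_nat 2)).atTop_mul_const
      (Real.log_pos hq)
  have hdeg := natDegree_eq_zero_of_forall_norm_eval_le _ hγ hB
  intro m hm hmN
  rw [← coeff_diffOpSymbol (c := c) hmN]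
  exact coeff_eq_zero_of_natDegree_lt (hdeg.trans_lt hm)
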